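/- Let $L_b$ be a nonnegative random variable with $\mathbb{P}(L_b>u)=\mathbb{E}[1-\sqrt{(b-Z_u)^+/b}]$ where, for each $u>0$, the law of $Z_u$ satisfies $\mathbb{E}\big[\int_0^\infty f(Z_t)\,\mathrm{d}t\big]=\sqrt{\frac{3}{2\pi}}\int_0^\infty \frac{f(y)}{\sqrt{y}(1+y)}\,\mathrm{d}y$ for all measurable $f\geq 0$ with $f(0)=0$. Then $\mathbb{E}[L_b]=\sqrt{\frac{3}{2\pi}}\int_0^\infty\Big(1-\sqrt{\frac{(b-y)^+}{b}}\Big)\frac{\mathrm{d}y}{\sqrt{y}(1+y)} = \sqrt{\frac{3\pi}{2}}\Big(1-\frac{\sqrt{1+b}-1}{\sqrt{b}}\Big)$. -/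

import Mathlib

/-!
Split the integrand as `1 / (√y (1 + y)) - √((b - y)⁺ / b) / (√y (1 + y))`. The substitution
`y = x²` turns the first integral into `∫₀^∞ 2 / (1 + x²) dx = π`. The second integrand vanishes
for `y ≥ b`, and `y = b / (1 + x²)`, a bijection of `(0, ∞)` onto `(0, b)`, turns it into
`2 √b ∫₀^∞ x² / ((1 + b + x²) (1 + x²)) dx`; partial fractions evaluate this as
`π √b / (√(1 + b) + 1) = π (√(1 + b) - 1) / √b`.
-/

open MeasureTheory Set Real

lemma integrable_inv_sq_add_sq {c : ℝ} (hc : c ≠ 0) :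
    Integrable fun x : ℝ => (c ^ 2 + x ^ 2)⁻¹ := by
  refine ((integrable_inv_one_add_sq.comp_div hc).const_mul (c ^ 2)⁻¹).congr
    (Filter.Eventually.of_forall fun x => ?_)
  field_simp

lemma integral_Ioi_inv_sq_add_sq {c : ℝ} (hc : 0 < c) :
    ∫ x in Ioi (0 : ℝ), (c ^ 2 + x ^ 2)⁻¹ = π / (2 * c) := by
  have hscale : ∀ x : ℝ, (c ^ 2 + x ^ 2)⁻¹ = (c ^ 2)⁻¹ * (1 + (c⁻¹ * x) ^ 2)⁻¹ := fun x => by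
    field_simp
  simp_rw [hscale]
  rw [integral_const_mul, integral_comp_mul_left_Ioi (fun x => (1 + x ^ 2)⁻¹) 0 (inv_pos.2 hc)]
  simp only [mul_zero, integral_Ioi_inv_one_add_sq, arctan_zero, sub_zero, inv_inv, smul_eq_mul]
  field_simp

lemma sq_div_sq_add_sq_mul_one_add_sq {c : ℝ} (hc : 0 < c) (hc1 : c ≠ 1) (x : ℝ) :
    x ^ 2 / ((c ^ 2 + x ^ 2) * (1 + x ^ 2))
      = (c ^ 2 - 1)⁻¹ * (c ^ 2 * (c ^ 2 + x ^ 2)⁻¹ - (1 + x ^ 2)⁻¹) := by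
  have : c ^ 2 - 1 ≠ 0 := sub_ne_zero.2 ((pow_eq_one_iff_of_nonneg hc.le two_ne_zero).not.2 hc1)
  field_simp
  ring

lemma integrable_sq_div_sq_add_sq_mul_one_add_sq {c : ℝ} (hc : 0 < c) (hc1 : c ≠ 1) :
    Integrable fun x : ℝ => x ^ 2 / ((c ^ 2 + x ^ 2) * (1 + x ^ 2)) := by
  simp_rw [sq_div_sq_add_sq_mul_one_add_sq hc hc1]
  exact (((integrable_inv_sq_add_sq hc.ne').const_mul _).sub integrable_inv_one_add_sq).const_mul _

lemma integral_Ioi_sq_div_sq_add_sq_mul_one_add_sq {c : ℝ} (hc : 0 < c) (hc1 : c ≠ 1) :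
    ∫ x in Ioi (0 : ℝ), x ^ 2 / ((c ^ 2 + x ^ 2) * (1 + x ^ 2)) = π / (2 * (c + 1)) := by
  simp_rw [sq_div_sq_add_sq_mul_one_add_sq hc hc1]
  rw [integral_const_mul, integral_sub ((integrable_inv_sq_add_sq hc.ne').const_mul _).integrableOn
    integrable_inv_one_add_sq.integrableOn, integral_const_mul, integral_Ioi_inv_sq_add_sq hc,
    integral_Ioi_inv_one_add_sq, arctan_zero, sub_zero]
  have : c - 1 ≠ 0 := sub_ne_zero.2 hc1
  rw [show c ^ 2 - 1 = (c - 1) * (c + 1) by ring]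
  field_simp

lemma integrableOn_image_and_integral_image_eq {f f' g h : ℝ → ℝ} {s : Set ℝ}
    (hs : MeasurableSet s) (hf' : ∀ x ∈ s, HasDerivWithinAt f (f' x) s x) (hf : InjOn f s)
    (hh : IntegrableOn h s) (hgh : EqOn (fun x => |f' x| * g (f x)) h s) :
    IntegrableOn g (f '' s) ∧ ∫ y in f '' s, g y = ∫ x in s, h x := by
  refine ⟨(integrableOn_image_iff_integrableOn_abs_deriv_smul hs hf' hf g).2
    (hh.congr_fun hgh.symm hs), ?_⟩
  rw [integral_image_eq_integral_abs_deriv_smul hs hf' hf g]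
  exact setIntegral_congr_fun hs hgh

lemma abs_two_mul_rpow_mul_one_div_sqrt_mul_one_add {x : ℝ} (hx : 0 < x) :
    (|2| * x ^ ((2 : ℝ) - 1)) • (1 / (√(x ^ (2 : ℝ)) * (1 + x ^ (2 : ℝ))))
      = 2 * (1 + x ^ 2)⁻¹ := by
  rw [rpow_two, sqrt_sq hx.le, smul_eq_mul]
  norm_num
  field_simp

lemma integrableOn_Ioi_one_div_sqrt_mul_one_add :
    IntegrableOn (fun y : ℝ => 1 / (√y * (1 + y))) (Ioi 0) := by
  refine (integrableOn_Ioi_comp_rpow_iff _ two_ne_zero).1 ?_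
  exact (integrable_inv_one_add_sq.const_mul 2).integrableOn.congr_fun
    (fun x hx => (abs_two_mul_rpow_mul_one_div_sqrt_mul_one_add hx).symm) measurableSet_Ioi

lemma integral_Ioi_one_div_sqrt_mul_one_add :
    ∫ y in Ioi (0 : ℝ), 1 / (√y * (1 + y)) = π := by
  rw [← integral_comp_rpow_Ioi _ two_ne_zero,
    setIntegral_congr_fun measurableSet_Ioi fun x hx =>
      abs_two_mul_rpow_mul_one_div_sqrt_mul_one_add hx,
    integral_const_mul, integral_Ioi_inv_one_add_sq, arctan_zero]
  ring

lemma hasDerivAt_div_one_add_sq (b x : ℝ) :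
    HasDerivAt (fun x : ℝ => b / (1 + x ^ 2)) (-(2 * b * x) / (1 + x ^ 2) ^ 2) x := by
  refine ((hasDerivAt_const x b).fun_div ((hasDerivAt_pow 2 x).const_add 1) (by positivity))
    |>.congr_deriv ?_
  norm_num
  ring

lemma strictAntiOn_div_one_add_sq {b : ℝ} (hb : 0 < b) :
    StrictAntiOn (fun x : ℝ => b / (1 + x ^ 2)) (Ici 0) := fun p hp q _ hpq => by
  have : p ^ 2 < q ^ 2 := pow_lt_pow_left₀ hpq hp two_ne_zero
  exact div_lt_div_of_pos_left hb (by positivity) (by linarith)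

lemma image_div_one_add_sq_Ioi {b : ℝ} (hb : 0 < b) :
    (fun x : ℝ => b / (1 + x ^ 2)) '' Ioi 0 = Ioo 0 b := by
  ext y
  constructor
  · rintro ⟨x, hx, rfl⟩
    exact ⟨by positivity, div_lt_self hb (by have := pow_pos (mem_Ioi.1 hx) 2; linarith)⟩
  · rintro ⟨hy, hyb⟩
    have hpos : 0 < b / y - 1 := by rw [sub_pos, one_lt_div hy]; exact hyb
    refine ⟨√(b / y - 1), sqrt_pos.2 hpos, ?_⟩
    simp only [sq_sqrt hpos.le, add_sub_cancel]
    field_simp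

lemma abs_deriv_mul_sqrt_pos_part_div_comp_div_one_add_sq {b x : ℝ} (hb : 0 < b) (hx : 0 < x) :
    |-(2 * b * x) / (1 + x ^ 2) ^ 2| *
        (√(max (b - b / (1 + x ^ 2)) 0 / b) / (√(b / (1 + x ^ 2)) * (1 + b / (1 + x ^ 2))))
      = 2 * √b * (x ^ 2 / ((1 + b + x ^ 2) * (1 + x ^ 2))) := by
  have hu : 0 < 1 + x ^ 2 := by positivity
  have hfrac : max (b - b / (1 + x ^ 2)) 0 / b = x ^ 2 / (1 + x ^ 2) := by
    rw [max_eq_left (sub_nonneg.2 (div_le_self hb.le (by nlinarith)))]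
    field_simp
    ring
  rw [hfrac, sqrt_div (sq_nonneg x), sqrt_sq hx.le, sqrt_div hb.le,
    abs_of_neg (div_neg_of_neg_of_pos (by nlinarith) (by positivity))]
  have hsb : √b ^ 2 = b := sq_sqrt hb.le
  have : 0 < √(1 + x ^ 2) := sqrt_pos.2 hu
  have : 0 < √b := sqrt_pos.2 hb
  field_simp
  rw [hsb]
  ring

lemma integrableOn_and_integral_Ioi_sqrt_pos_part_div {b : ℝ} (hb : 0 < b) :
    IntegrableOn (fun y : ℝ => √(max (b - y) 0 / b) / (√y * (1 + y))) (Ioi 0) ∧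
      ∫ y in Ioi (0 : ℝ), √(max (b - y) 0 / b) / (√y * (1 + y))
        = π * (√(1 + b) - 1) / √b := by
  set c := √(1 + b)
  have hc : 1 < c := lt_sqrt_of_sq_lt (by linarith)
  have hc2 : c ^ 2 = 1 + b := sq_sqrt (by linarith)
  obtain ⟨hint, heq⟩ := integrableOn_image_and_integral_image_eq
    (g := fun y => √(max (b - y) 0 / b) / (√y * (1 + y))) measurableSet_Ioi
    (fun x _ => (hasDerivAt_div_one_add_sq b x).hasDerivWithinAt)
    ((strictAntiOn_div_one_add_sq hb).injOn.mono Ioi_subset_Ici_self)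
    ((integrable_sq_div_sq_add_sq_mul_one_add_sq (by linarith) hc.ne').const_mul
      (2 * √b)).integrableOn
    (fun x hx => by
      rw [hc2]; exact abs_deriv_mul_sqrt_pos_part_div_comp_div_one_add_sq hb hx)
  rw [image_div_one_add_sq_Ioi hb] at hint heq
  have hvanish : ∀ y ∈ Ioi 0 \ Ioo 0 b, √(max (b - y) 0 / b) / (√y * (1 + y)) = 0 :=
    fun y ⟨hy, hyb⟩ => by
      rw [max_eq_right (by simp_all), zero_div, sqrt_zero, zero_div]
  refine ⟨hint.of_forall_sdiff_eq_zero measurableSet_Ioi hvanish, ?_⟩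
  rw [setIntegral_eq_of_subset_of_forall_sdiff_eq_zero measurableSet_Ioi Ioo_subset_Ioi_self
    hvanish, heq, integral_const_mul,
    integral_Ioi_sq_div_sq_add_sq_mul_one_add_sq (by linarith) hc.ne']
  have hsb : √b ^ 2 = b := sq_sqrt hb.le
  have : 0 < √b := sqrt_pos.2 hb
  have : 0 < c + 1 := by linarith
  field_simp
  linear_combination hsb - hc2

/-- Evaluation of the first-moment integral for the length of the Brownian
annulus: for every `b > 0`,
`√(3/(2π)) ∫₀^∞ (1 - √((b-y)⁺/b)) / (√y (1+y)) dy
  = √(3π/2) (1 - (√(1+b) - 1)/√b)`. -/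
theorem annulus_length_integral (b : ℝ) (hb : 0 < b) :
    Real.sqrt (3 / (2 * Real.pi)) *
        ∫ y in Set.Ioi (0 : ℝ),
          (1 - Real.sqrt (max (b - y) 0 / b)) / (Real.sqrt y * (1 + y))
      = Real.sqrt (3 * Real.pi / 2) *
          (1 - (Real.sqrt (1 + b) - 1) / Real.sqrt b) := by
  obtain ⟨hJ, hJval⟩ := integrableOn_and_integral_Ioi_sqrt_pos_part_div hb
  simp_rw [sub_div]
  rw [integral_sub integrableOn_Ioi_one_div_sqrt_mul_one_add hJ,
    integral_Ioi_one_div_sqrt_mul_one_add, hJval]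
  have hconst : √(3 / (2 * π)) * π = √(3 * π / 2) := by
    rw [← sqrt_sq pi_pos.le, ← sqrt_mul (by positivity), sqrt_sq pi_pos.le]
    congr 1
    field_simp
  rw [← hconst]
  ring
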